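/- arXiv:1112.0736 — 3 statements merged into one kernel-verified Lean document; each statement's English description precedes it below -/
import Mathlib

section
/- For any bipartite density matrix ρ^{AB} and any rank-one projective measurement {Π_k^B} on B, the average post-measurement entropy of A is at most the global entropy: Σ_k p_k S(ρ_k^A) ≤ S(ρ^{AB}). -/
open scoped Kronecker Classical ComplexOrder
open Matrix

noncomputable section

variable {n : Type*} [Fintype n] [DecidableEq n]

/-- A density matrix: positive semidefinite with unit trace. -/
def IsDensity (ρ : Matrix n n ℂ) : Prop := ρ.PosSemidef ∧ ρ.trace = 1

/-- von Neumann entropy (base 2), via eigenvalues; junk value 0 for non-Hermitian input. -/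
def vnEntropy (A : Matrix n n ℂ) : ℝ :=
  if h : A.IsHermitian then -∑ i, h.eigenvalues i * Real.logb 2 (h.eigenvalues i) else 0

/-- Matrix logarithm (base 2) via the spectral decomposition; junk value 0 for
non-Hermitian input.  The convention `Real.logb 2 0 = 0` handles zero eigenvalues. -/
def matLog (A : Matrix n n ℂ) : Matrix n n ℂ :=
  if h : A.IsHermitian then
    (h.eigenvectorUnitary : Matrix n n ℂ) *
      Matrix.diagonal (fun i => (Real.logb 2 (h.eigenvalues i) : ℂ)) *
      (star (h.eigenvectorUnitary : Matrix n n ℂ))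
  else 0

/-- Quantum relative entropy  S(ρ‖σ) = Tr ρ (log₂ ρ − log₂ σ)  (real part of the trace). -/
def relEntropy (ρ σ : Matrix n n ℂ) : ℝ :=
  ((ρ * (matLog ρ - matLog σ)).trace).re

variable {a b : Type*} [Fintype a] [DecidableEq a] [Fintype b] [DecidableEq b]
variable {ι : Type*} [Fintype ι]

/-- Partial trace over the first (A) factor. -/
def ptraceA (ρ : Matrix (a × b) (a × b) ℂ) : Matrix b b ℂ := fun i j => ∑ x, ρ (x, i) (x, j)

/-- Partial trace over the second (B) factor. -/
def ptraceB (ρ : Matrix (a × b) (a × b) ℂ) : Matrix a a ℂ := fun i j => ∑ y, ρ (i, y) (j, y)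

/-- A projective measurement: mutually orthogonal Hermitian projections summing to the identity. -/
def IsProjMeas (P : ι → Matrix b b ℂ) : Prop :=
  (∀ k, (P k).IsHermitian) ∧ (∀ j k, P j * P k = if j = k then P k else 0) ∧ ∑ k, P k = 1

/-- A rank-one projective measurement (each projection has trace one). -/
def IsRankOneMeas (P : ι → Matrix b b ℂ) : Prop :=
  IsProjMeas P ∧ ∀ k, (P k).trace = 1

/-- The measurement leaves the state `ρB` invariant. -/
def Invariant (P : ι → Matrix b b ℂ) (ρB : Matrix b b ℂ) : Prop :=
  ∑ k, P k * ρB * P k = ρB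

/-- Post-measurement state for a measurement on the B subsystem. -/
def postMeas (P : ι → Matrix b b ℂ) (ρ : Matrix (a × b) (a × b) ℂ) :
    Matrix (a × b) (a × b) ℂ :=
  ∑ k, ((1 : Matrix a a ℂ) ⊗ₖ P k) * ρ * ((1 : Matrix a a ℂ) ⊗ₖ P k)

/-- Probability of outcome `k`. -/
def probOf (P : ι → Matrix b b ℂ) (ρ : Matrix (a × b) (a × b) ℂ) (k : ι) : ℝ :=
  (((1 : Matrix a a ℂ) ⊗ₖ P k) * ρ).trace.re

/-- Conditional state of A given outcome `k`. -/
def condA (P : ι → Matrix b b ℂ) (ρ : Matrix (a × b) (a × b) ℂ) (k : ι) : Matrix a a ℂ :=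
  ((((1 : Matrix a a ℂ) ⊗ₖ P k) * ρ).trace)⁻¹ •
    ptraceB (((1 : Matrix a a ℂ) ⊗ₖ P k) * ρ * ((1 : Matrix a a ℂ) ⊗ₖ P k))

/-- Relative entropy of nonlocality: supremum of S(ρ‖ρ̃) over rank-one projective
measurements on B leaving ρ^B invariant. -/
def NRE (ρ : Matrix (a × b) (a × b) ℂ) : ℝ :=
  sSup {x | ∃ P : b → Matrix b b ℂ, IsRankOneMeas P ∧ Invariant P (ptraceA ρ) ∧
    x = relEntropy ρ (postMeas P ρ)}

/-- Minimal quantum side information. -/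
def Schi (ρ : Matrix (a × b) (a × b) ℂ) : ℝ :=
  sInf {x | ∃ P : b → Matrix b b ℂ, IsRankOneMeas P ∧ Invariant P (ptraceA ρ) ∧
    x = vnEntropy (ptraceB ρ) - ∑ k, probOf P ρ k * vnEntropy (condA P ρ k)}


/-!
Diagonalise `ρ = Σₘ λₘ |uₘ⟩⟨uₘ|` and write `Πₖ = |vₖ⟩⟨vₖ|`. The unnormalised conditional state
`pₖ ρₖ` is the Gram matrix `Cₖ Cₖᴴ` of the vectors `√λₘ (I ⊗ ⟨vₖ|) uₘ`, whose squared norms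
`rₖₘ` satisfy `Σₘ rₖₘ = pₖ` and, by Parseval for the basis `(vₖ)`, `Σₖ rₖₘ = λₘ`.
The entropy of a Gram matrix is at most the Shannon entropy of the squared column norms
(Schur concavity), so `Σₖ pₖ S(ρₖ) ≤ H(M | K)` for the joint distribution `r`, and
`H(M | K) ≤ H(M) = S(ρ)` by concavity of `-x log x`.
-/

open Real

lemma sum_mul_negMulLog_le_negMulLog_sum {K : Type*} [Fintype K] {w x : K → ℝ}
    (hw : ∀ k, 0 ≤ w k) (hx : ∀ k, 0 ≤ x k) (hw1 : ∑ k, w k ≤ 1) :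
    ∑ k, w k * negMulLog (x k) ≤ negMulLog (∑ k, w k * x k) := by
  -- put the missing mass `1 - ∑ w` on the point `0`, where `negMulLog` vanishes
  let W : Option K → ℝ := fun o => o.elim (1 - ∑ k, w k) w
  let X : Option K → ℝ := fun o => o.elim 0 x
  have h := concaveOn_negMulLog.le_map_sum (t := Finset.univ) (w := W) (p := X)
    (by rintro (_ | k) _ <;> simp [W, hw, hw1]) (by simp [W, Fintype.sum_option])
    (by rintro (_ | k) _ <;> simp [X, hx])
  simpa [W, X, Fintype.sum_option] using h

lemma sum_sum_mul_negMulLog_div_le {K M : Type*} [Fintype K] [Fintype M] {r : K → M → ℝ}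
    (hr : ∀ k m, 0 ≤ r k m) (hr1 : ∑ k, ∑ m, r k m ≤ 1) :
    ∑ k, ∑ m, (∑ m', r k m') * negMulLog (r k m / ∑ m', r k m') ≤
      ∑ m, negMulLog (∑ k, r k m) := by
  rw [Finset.sum_comm]
  refine Finset.sum_le_sum fun m _ => ?_
  have hcancel (k : K) : (∑ m', r k m') * (r k m / ∑ m', r k m') = r k m :=
    mul_div_cancel_of_imp' fun h => le_antisymm
      (h ▸ Finset.single_le_sum (fun m' _ => hr k m') (Finset.mem_univ m)) (hr k m)
  simpa only [hcancel] using sum_mul_negMulLog_le_negMulLog_sum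
    (w := fun k => ∑ m', r k m') (x := fun k => r k m / ∑ m', r k m')
    (fun k => Finset.sum_nonneg fun m' _ => hr k m')
    (fun k => div_nonneg (hr k m) (Finset.sum_nonneg fun m' _ => hr k m')) hr1

lemma exists_eq_single_of_sum_eq_one {β : Type*} [Fintype β] [DecidableEq β] {μ : β → ℝ}
    (hμ : ∀ i, μ i = 0 ∨ μ i = 1) (hsum : ∑ i, μ i = 1) : ∃ i₀, μ = Pi.single i₀ 1 := by
  obtain ⟨i₀, -, hi₀⟩ := Finset.exists_ne_zero_of_sum_ne_zero (hsum.trans_ne one_ne_zero)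
  have hμ₀ : μ i₀ = 1 := (hμ i₀).resolve_left hi₀
  refine ⟨i₀, funext fun j => ?_⟩
  rcases eq_or_ne j i₀ with rfl | hj
  · simp [hμ₀]
  · have hpair := Finset.sum_le_sum_of_subset_of_nonneg (Finset.subset_univ {j, i₀})
      (fun i _ _ => (hμ i).elim (·.ge) (fun h => h ▸ zero_le_one))
    rw [Finset.sum_pair hj, hsum, hμ₀] at hpair
    rcases hμ j with h | h <;> simp [hj, h] at hpair ⊢
    linarith

lemma Matrix.mul_conjTranspose_self_apply_self {M I : Type*} [Fintype I] (A : Matrix M I ℂ)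
    (m : M) : (A * Aᴴ) m m = ((∑ i, Complex.normSq (A m i) : ℝ) : ℂ) := by
  simp [mul_apply, Complex.mul_conj]

lemma Matrix.conjTranspose_mul_self_apply_self {M I : Type*} [Fintype M] (A : Matrix M I ℂ)
    (i : I) : (Aᴴ * A) i i = ((∑ m, Complex.normSq (A m i) : ℝ) : ℂ) := by
  simp [mul_apply, Complex.normSq_eq_conj_mul_self]

lemma Matrix.sum_normSq_eq_of_conjTranspose_mul_self_eq_diagonal {M I : Type*} [Fintype M]
    [DecidableEq I] {G : Matrix M I ℂ} {ν : I → ℝ}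
    (hG : Gᴴ * G = diagonal (fun i => (ν i : ℂ))) (i : I) :
    ∑ m, Complex.normSq (G m i) = ν i := by
  have h := conjTranspose_mul_self_apply_self G i
  rw [hG, diagonal_apply_eq] at h
  exact_mod_cast h.symm

lemma Matrix.sum_normSq_le_one_of_isIdempotentElem {M I : Type*} [Fintype M] [DecidableEq M]
    [Fintype I] {H : Matrix M I ℂ} (hH : IsIdempotentElem (H * Hᴴ)) (m : M) :
    ∑ i, Complex.normSq (H m i) ≤ 1 := by
  have hQ : (1 - H * Hᴴ).PosSemidef := by
    have : 1 - H * Hᴴ = (1 - H * Hᴴ)ᴴ * (1 - H * Hᴴ) := by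
      rw [conjTranspose_sub, conjTranspose_one, (isHermitian_mul_conjTranspose_self H).eq,
        sub_mul, mul_sub, mul_sub, hH.eq]
      simp
    rw [this]
    exact posSemidef_conjTranspose_mul_self _
  have := hQ.diag_nonneg (i := m)
  rw [sub_apply, one_apply_eq, mul_conjTranspose_self_apply_self, sub_nonneg] at this
  exact_mod_cast this

/-- Bessel's inequality for the normalised nonzero columns of `G`. -/
lemma Matrix.sum_normSq_div_le_one_of_conjTranspose_mul_self_eq_diagonal {M I : Type*}
    [Fintype M] [DecidableEq M] [Fintype I] [DecidableEq I] {G : Matrix M I ℂ} {ν : I → ℝ}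
    (hG : Gᴴ * G = diagonal (fun i => (ν i : ℂ))) (hν : ∀ i, 0 ≤ ν i) (m : M) :
    ∑ i, Complex.normSq (G m i) / ν i ≤ 1 := by
  let c : I → ℝ := fun i => (√(ν i))⁻¹
  have hc (i : I) : c i * c i = (ν i)⁻¹ := by rw [← mul_inv, Real.mul_self_sqrt (hν i)]
  have hcν (i : I) : c i * (c i * ν i * c i) = c i := by
    rcases eq_or_ne (ν i) 0 with h | h
    · simp [c, h]
    · rw [← mul_assoc, ← mul_assoc, hc, inv_mul_cancel₀ h, one_mul]
  let H := G * diagonal (fun i => (c i : ℂ))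
  have hHH : Hᴴ * H = diagonal (fun i => ((c i * ν i * c i : ℝ) : ℂ)) := by
    simp only [H, conjTranspose_mul, diagonal_conjTranspose, Matrix.mul_assoc]
    rw [← Matrix.mul_assoc Gᴴ, hG, diagonal_mul_diagonal, diagonal_mul_diagonal]
    congr 1; funext i; simp [Complex.conj_ofReal]; ring
  have hidem : IsIdempotentElem (H * Hᴴ) := by
    have : H * (Hᴴ * H) = H := by
      simp only [hHH, H, Matrix.mul_assoc, diagonal_mul_diagonal]
      congr 2; ext i; exact_mod_cast hcν i
    rw [IsIdempotentElem, Matrix.mul_assoc, ← Matrix.mul_assoc Hᴴ, ← Matrix.mul_assoc H, this]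
  calc ∑ i, Complex.normSq (G m i) / ν i = ∑ i, Complex.normSq (H m i) := by
        refine Finset.sum_congr rfl fun i _ => ?_
        simp [H, mul_diagonal, Complex.normSq_mul, hc, div_eq_mul_inv]
    _ ≤ 1 := sum_normSq_le_one_of_isIdempotentElem hidem m

/-- Schur concavity of entropy: the weights `normSq (G m i) / ν i` form a doubly substochastic
matrix carrying `ν` to the row norms of `G`. -/
lemma Matrix.sum_negMulLog_le_of_conjTranspose_mul_self_eq_diagonal {M I : Type*}
    [Fintype M] [DecidableEq M] [Fintype I] [DecidableEq I] {G : Matrix M I ℂ} {ν : I → ℝ}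
    (hG : Gᴴ * G = diagonal (fun i => (ν i : ℂ))) :
    ∑ i, negMulLog (ν i) ≤ ∑ m, negMulLog (∑ i, Complex.normSq (G m i)) := by
  have hcol := sum_normSq_eq_of_conjTranspose_mul_self_eq_diagonal hG
  have hν (i : I) : 0 ≤ ν i := hcol i ▸ Finset.sum_nonneg fun m _ => Complex.normSq_nonneg _
  let D : M → I → ℝ := fun m i => Complex.normSq (G m i) / ν i
  have hD (m : M) (i : I) : D m i * ν i = Complex.normSq (G m i) :=
    div_mul_cancel_of_imp fun h => (Finset.sum_eq_zero_iff_of_nonneg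
      (fun m _ => Complex.normSq_nonneg _)).mp ((hcol i).trans h) m (Finset.mem_univ m)
  have hDcol (i : I) : ∑ m, D m i * negMulLog (ν i) = negMulLog (ν i) := by
    rcases eq_or_ne (ν i) 0 with h | h
    · simp [h]
    · rw [← Finset.sum_mul, ← Finset.sum_div, hcol, div_self h, one_mul]
  calc ∑ i, negMulLog (ν i) = ∑ m, ∑ i, D m i * negMulLog (ν i) := by
        rw [Finset.sum_comm]; exact Finset.sum_congr rfl fun i _ => (hDcol i).symm
    _ ≤ ∑ m, negMulLog (∑ i, D m i * ν i) := Finset.sum_le_sum fun m _ =>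
        sum_mul_negMulLog_le_negMulLog_sum (fun i => div_nonneg (Complex.normSq_nonneg _) (hν i))
          hν (sum_normSq_div_le_one_of_conjTranspose_mul_self_eq_diagonal hG hν m)
    _ = ∑ m, negMulLog (∑ i, Complex.normSq (G m i)) := by simp only [hD]

lemma Matrix.sum_negMulLog_eigenvalues_mul_conjTranspose_le {α M : Type*} [Fintype α]
    [DecidableEq α] [Fintype M] [DecidableEq M] (A : Matrix α M ℂ) :
    ∑ i, negMulLog ((isHermitian_mul_conjTranspose_self A).eigenvalues i) ≤
      ∑ m, negMulLog (∑ x, Complex.normSq (A x m)) := by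
  set hH := isHermitian_mul_conjTranspose_self A
  let U : Matrix α α ℂ := hH.eigenvectorUnitary
  -- `G = Aᴴ U` has orthogonal columns of squared norms the eigenvalues, and `G Gᴴ = Aᴴ A`
  let G := Aᴴ * U
  have hG : Gᴴ * G = diagonal (fun i => (hH.eigenvalues i : ℂ)) := by
    have h := hH.conjStarAlgAut_star_eigenvectorUnitary
    rw [Unitary.conjStarAlgAut_star_apply] at h
    simpa [G, conjTranspose_mul, Matrix.mul_assoc, U, star_eq_conjTranspose,
      Function.comp_def] using h
  have hGG : G * Gᴴ = Aᴴ * A := by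
    simp [G, conjTranspose_mul, Matrix.mul_assoc, ← Matrix.mul_assoc U, U,
      ← star_eq_conjTranspose]
  have hrow (m : M) : ∑ i, Complex.normSq (G m i) = ∑ x, Complex.normSq (A x m) := by
    have h := mul_conjTranspose_self_apply_self G m
    rw [hGG, conjTranspose_mul_self_apply_self] at h
    exact_mod_cast h.symm
  simpa only [hrow] using sum_negMulLog_le_of_conjTranspose_mul_self_eq_diagonal hG

lemma Matrix.IsHermitian.exists_eq_vecMulVec_star {β : Type*} [Fintype β] [DecidableEq β]
    {Q : Matrix β β ℂ} (hQ : Q.IsHermitian) (hidem : IsIdempotentElem Q) (htr : Q.trace = 1) :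
    ∃ v : β → ℂ, Q = vecMulVec v (star v) := by
  have hμ (i : β) : hQ.eigenvalues i = 0 ∨ hQ.eigenvalues i = 1 := by
    simpa using hidem.spectrum_subset ℝ (hQ.eigenvalues_mem_spectrum_real i)
  have hsum : ∑ i, hQ.eigenvalues i = 1 := by
    simpa [htr] using congrArg Complex.re hQ.trace_eq_sum_eigenvalues.symm
  obtain ⟨i₀, hi₀⟩ := exists_eq_single_of_sum_eq_one hμ hsum
  let U : Matrix β β ℂ := hQ.eigenvectorUnitary
  refine ⟨U *ᵥ Pi.single i₀ 1, ?_⟩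
  have hdiag : diagonal (RCLike.ofReal ∘ hQ.eigenvalues) =
      vecMulVec (Pi.single i₀ (1 : ℂ)) (Pi.single i₀ 1) := by
    ext i j
    rw [hi₀, diagonal_apply, vecMulVec_apply]
    by_cases hi : i = i₀ <;> by_cases hj : j = i₀ <;> simp [hi, hj]
    grind
  conv_lhs => rw [hQ.spectral_theorem, Unitary.conjStarAlgAut_apply, hdiag]
  rw [mul_vecMulVec, vecMulVec_mul]
  congr 1
  ext j
  simp [vecMul, dotProduct, Pi.single_apply, U, star_apply]

lemma Matrix.PosSemidef.exists_eq_mul_conjTranspose {α : Type*} [Fintype α] [DecidableEq α]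
    {A : Matrix α α ℂ} (hA : A.PosSemidef) :
    ∃ Z : Matrix α α ℂ, A = Z * Zᴴ ∧ ∀ m, ∑ z, Complex.normSq (Z z m) = hA.1.eigenvalues m := by
  let U : Matrix α α ℂ := hA.1.eigenvectorUnitary
  let D : Matrix α α ℂ := diagonal fun m => ((√(hA.1.eigenvalues m) : ℝ) : ℂ)
  have hDD : Dᴴ * D = diagonal fun m => ((hA.1.eigenvalues m : ℝ) : ℂ) := by
    rw [diagonal_conjTranspose, diagonal_mul_diagonal]
    congr 1; funext m
    simp [← Complex.ofReal_mul, Real.mul_self_sqrt (hA.eigenvalues_nonneg m)]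
  have hD : D * Dᴴ = Dᴴ * D := by
    simp only [D, diagonal_conjTranspose, diagonal_mul_diagonal, mul_comm]
  refine ⟨U * D, ?_, sum_normSq_eq_of_conjTranspose_mul_self_eq_diagonal ?_⟩
  · rw [show U * D * (U * D)ᴴ = U * (D * Dᴴ) * Uᴴ by
      simp only [conjTranspose_mul, Matrix.mul_assoc], hD, hDD]
    exact hA.1.spectral_theorem
  · rw [conjTranspose_mul, Matrix.mul_assoc, ← Matrix.mul_assoc Uᴴ,
      show Uᴴ * U = 1 from Unitary.coe_star_mul_self _, Matrix.one_mul, hDD]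

lemma vnEntropy_eq_sum_negMulLog {α : Type*} [Fintype α] [DecidableEq α] {A : Matrix α α ℂ}
    (hA : A.IsHermitian) : vnEntropy A = (∑ i, negMulLog (hA.eigenvalues i)) / log 2 := by
  rw [vnEntropy, dif_pos hA, Finset.sum_div, ← Finset.sum_neg_distrib]
  refine Finset.sum_congr rfl fun i _ => ?_
  rw [negMulLog, Real.logb]
  ring

lemma vnEntropy_mul_conjTranspose_le {α M : Type*} [Fintype α] [DecidableEq α] [Fintype M]
    [DecidableEq M] (A : Matrix α M ℂ) :
    vnEntropy (A * Aᴴ) ≤ (∑ m, negMulLog (∑ x, Complex.normSq (A x m))) / log 2 := by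
  rw [vnEntropy_eq_sum_negMulLog (isHermitian_mul_conjTranspose_self A)]
  gcongr
  exact sum_negMulLog_eigenvalues_mul_conjTranspose_le A

lemma mul_vnEntropy_inv_smul_mul_conjTranspose_le {α M : Type*} [Fintype α] [DecidableEq α]
    [Fintype M] [DecidableEq M] (C : Matrix α M ℂ) {t : ℝ} (ht : 0 ≤ t) :
    t * vnEntropy ((t : ℂ)⁻¹ • (C * Cᴴ)) ≤
      (∑ m, t * negMulLog ((∑ x, Complex.normSq (C x m)) / t)) / log 2 := by
  let A := (((√t)⁻¹ : ℝ) : ℂ) • C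
  have hAA : A * Aᴴ = (t : ℂ)⁻¹ • (C * Cᴴ) := by
    dsimp only [A]
    rw [conjTranspose_smul, Matrix.smul_mul, Matrix.mul_smul, smul_smul, Complex.star_def,
      Complex.conj_ofReal, ← Complex.ofReal_mul, ← mul_inv, Real.mul_self_sqrt ht,
      Complex.ofReal_inv]
  have hA (m : M) : ∑ x, Complex.normSq (A x m) = (∑ x, Complex.normSq (C x m)) / t := by
    simp [A, Complex.normSq_mul, ← Finset.mul_sum, div_eq_inv_mul, Real.mul_self_sqrt ht]
  calc t * vnEntropy ((t : ℂ)⁻¹ • (C * Cᴴ)) = t * vnEntropy (A * Aᴴ) := by rw [hAA]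
    _ ≤ t * ((∑ m, negMulLog (∑ x, Complex.normSq (A x m))) / log 2) :=
        mul_le_mul_of_nonneg_left (vnEntropy_mul_conjTranspose_le A) ht
    _ = _ := by simp only [hA, Finset.mul_sum, mul_div_assoc']

/-- `contractB v Z` is `(I ⊗ ⟨v|) Z`. -/
def contractB {α β M : Type*} [Fintype β] (v : β → ℂ) (Z : Matrix (α × β) M ℂ) :
    Matrix α M ℂ :=
  of fun x m => ∑ i, star (v i) * Z (x, i) m

lemma kronecker_vecMulVec_mul {α β M : Type*} [Fintype α] [DecidableEq α] [Fintype β]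
    (v : β → ℂ) (Z : Matrix (α × β) M ℂ) :
    ((1 : Matrix α α ℂ) ⊗ₖ vecMulVec v (star v)) * Z =
      of fun (xj : α × β) m => v xj.2 * contractB v Z xj.1 m := by
  ext ⟨x, j⟩ m
  simp [mul_apply, contractB, Fintype.sum_prod_type, one_apply, vecMulVec_apply, Finset.mul_sum,
    mul_assoc]

lemma ptraceB_kronecker_vecMulVec_conj {α β M : Type*} [Fintype α] [DecidableEq α]
    [Fintype β] [Fintype M] {v : β → ℂ} (hv : star v ⬝ᵥ v = 1) (Z : Matrix (α × β) M ℂ) :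
    ptraceB (((1 : Matrix α α ℂ) ⊗ₖ vecMulVec v (star v)) * (Z * Zᴴ) *
        ((1 : Matrix α α ℂ) ⊗ₖ vecMulVec v (star v))) =
      contractB v Z * (contractB v Z)ᴴ := by
  set K := (1 : Matrix α α ℂ) ⊗ₖ vecMulVec v (star v)
  have hK : Kᴴ = K := by
    rw [conjTranspose_kronecker, conjTranspose_one, conjTranspose_vecMulVec, star_star]
  have : K * (Z * Zᴴ) * K = (K * Z) * (K * Z)ᴴ := by
    rw [conjTranspose_mul, hK]; simp only [Matrix.mul_assoc]
  rw [this, kronecker_vecMulVec_mul]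
  ext x y
  simp only [ptraceB, mul_apply, conjTranspose_apply, of_apply, star_mul']
  rw [← one_mul (∑ j : M, _), ← hv, dotProduct, Finset.sum_mul]
  refine Finset.sum_congr rfl fun i _ => ?_
  rw [Finset.mul_sum]
  refine Finset.sum_congr rfl fun j _ => ?_
  simp only [Pi.star_apply]
  ring

lemma trace_ptraceB {α β : Type*} [Fintype α] [Fintype β] (X : Matrix (α × β) (α × β) ℂ) :
    (ptraceB X).trace = X.trace := by
  simp [trace, ptraceB, Fintype.sum_prod_type]

lemma trace_kronecker_vecMulVec_mul {α β M : Type*} [Fintype α] [DecidableEq α] [Fintype β]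
    [Fintype M] {v : β → ℂ} (hv : star v ⬝ᵥ v = 1) (Z : Matrix (α × β) M ℂ) :
    (((1 : Matrix α α ℂ) ⊗ₖ vecMulVec v (star v)) * (Z * Zᴴ)).trace =
      ((∑ m, ∑ x, Complex.normSq (contractB v Z x m) : ℝ) : ℂ) := by
  set K := (1 : Matrix α α ℂ) ⊗ₖ vecMulVec v (star v)
  have hKK : K * K = K := by
    rw [← mul_kronecker_mul, Matrix.one_mul, vecMulVec_mul_vecMulVec, hv, one_smul]
  calc (K * (Z * Zᴴ)).trace = (K * (Z * Zᴴ) * K).trace := by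
        rw [trace_mul_comm (K * (Z * Zᴴ)) K, ← Matrix.mul_assoc K K, hKK]
    _ = (contractB v Z * (contractB v Z)ᴴ).trace := by
        rw [← trace_ptraceB, ptraceB_kronecker_vecMulVec_conj hv]
    _ = _ := by
        simp only [trace, diag_apply, mul_conjTranspose_self_apply_self]
        push_cast
        exact Finset.sum_comm

lemma sum_sum_normSq_contractB {α β ι M : Type*} [Fintype α] [DecidableEq α] [Fintype β]
    [DecidableEq β] [Fintype ι] [Fintype M] {v : ι → β → ℂ}
    (hv : ∑ k, vecMulVec (v k) (star (v k)) = 1) (Z : Matrix (α × β) M ℂ) (m : M) :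
    ∑ k, ∑ x, Complex.normSq (contractB (v k) Z x m) = ∑ z, Complex.normSq (Z z m) := by
  -- the rows `star (v k)` form an isometry `V`, and `I ⊗ V` stacks all the contractions
  let V : Matrix ι β ℂ := of fun k i => star (v k i)
  have hV : Vᴴ * V = 1 := by
    rw [← hv]; ext i j; simp [V, mul_apply, Matrix.sum_apply, vecMulVec_apply]
  let Y := ((1 : Matrix α α ℂ) ⊗ₖ V) * Z
  have hY : Yᴴ * Y = Zᴴ * Z := by
    simp only [Y, conjTranspose_mul, conjTranspose_kronecker, conjTranspose_one,
      Matrix.mul_assoc]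
    rw [← Matrix.mul_assoc (1 ⊗ₖ Vᴴ), ← mul_kronecker_mul, Matrix.one_mul, hV,
      one_kronecker_one, Matrix.one_mul]
  have hYZ : ((∑ z, Complex.normSq (Y z m) : ℝ) : ℂ) = ((∑ z, Complex.normSq (Z z m) : ℝ) : ℂ) := by
    rw [← conjTranspose_mul_self_apply_self, hY, conjTranspose_mul_self_apply_self]
  rw [Finset.sum_comm, ← Fintype.sum_prod_type']
  refine (Finset.sum_congr rfl fun xk _ => ?_).trans (by exact_mod_cast hYZ)
  simp [Y, V, contractB, mul_apply, Fintype.sum_prod_type, one_apply]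

theorem sum_probOf_mul_vnEntropy_condA_le {α β ι M : Type*} [Fintype α] [DecidableEq α]
    [Fintype β] [DecidableEq β] [Fintype ι] [Fintype M] [DecidableEq M]
    (Z : Matrix (α × β) M ℂ) (hZ : ∑ m, ∑ z, Complex.normSq (Z z m) ≤ 1) {v : ι → β → ℂ}
    (hv1 : ∀ k, star (v k) ⬝ᵥ v k = 1) (hv : ∑ k, vecMulVec (v k) (star (v k)) = 1) :
    ∑ k, probOf (fun k => vecMulVec (v k) (star (v k))) (Z * Zᴴ) k *
        vnEntropy (condA (fun k => vecMulVec (v k) (star (v k))) (Z * Zᴴ) k) ≤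
      (∑ m, negMulLog (∑ z, Complex.normSq (Z z m))) / log 2 := by
  set r : ι → M → ℝ := fun k m => ∑ x, Complex.normSq (contractB (v k) Z x m)
  have hr (k : ι) (m : M) : 0 ≤ r k m := Finset.sum_nonneg fun x _ => Complex.normSq_nonneg _
  have hprob (k : ι) :
      probOf (fun k => vecMulVec (v k) (star (v k))) (Z * Zᴴ) k = ∑ m, r k m := by
    rw [probOf, trace_kronecker_vecMulVec_mul (hv1 k), Complex.ofReal_re]
  have hcond (k : ι) : condA (fun k => vecMulVec (v k) (star (v k))) (Z * Zᴴ) k =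
      ((∑ m, r k m : ℝ) : ℂ)⁻¹ • (contractB (v k) Z * (contractB (v k) Z)ᴴ) := by
    rw [condA, trace_kronecker_vecMulVec_mul (hv1 k), ptraceB_kronecker_vecMulVec_conj (hv1 k)]
  have hr1 : ∑ k, ∑ m, r k m ≤ 1 := by
    rwa [Finset.sum_comm, Finset.sum_congr rfl fun m _ => sum_sum_normSq_contractB hv Z m]
  calc _ = ∑ k, (∑ m, r k m) * vnEntropy (((∑ m, r k m : ℝ) : ℂ)⁻¹ •
          (contractB (v k) Z * (contractB (v k) Z)ᴴ)) := by simp only [hprob, hcond]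
    _ ≤ ∑ k, (∑ m, (∑ m', r k m') * negMulLog (r k m / ∑ m', r k m')) / log 2 :=
        Finset.sum_le_sum fun k _ => mul_vnEntropy_inv_smul_mul_conjTranspose_le _
          (Finset.sum_nonneg fun m _ => hr k m)
    _ ≤ (∑ m, negMulLog (∑ k, r k m)) / log 2 := by
        rw [← Finset.sum_div]
        gcongr
        exact sum_sum_mul_negMulLog_div_le hr hr1
    _ = _ := by simp only [r, sum_sum_normSq_contractB hv]

/-- The average post-measurement entropy of A is at most the global entropy. -/
theorem stmt4 (ρ : Matrix (a × b) (a × b) ℂ) (hρ : IsDensity ρ)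
    (P : b → Matrix b b ℂ) (hP : IsRankOneMeas P) :
    ∑ k, probOf P ρ k * vnEntropy (condA P ρ k) ≤ vnEntropy ρ := by
  obtain ⟨⟨hherm, horth, hsum⟩, htr⟩ := hP
  choose v hv using fun k => IsHermitian.exists_eq_vecMulVec_star (hherm k)
    ((horth k k).trans (if_pos rfl)) (htr k)
  obtain rfl : P = fun k => vecMulVec (v k) (star (v k)) := funext hv
  have hv1 (k : b) : star (v k) ⬝ᵥ v k = 1 := by
    rw [dotProduct_comm, ← trace_vecMulVec, htr k]
  obtain ⟨Z, rfl, hZ⟩ := hρ.1.exists_eq_mul_conjTranspose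
  have hZ1 : ∑ m, ∑ z, Complex.normSq (Z z m) = 1 := by
    simpa [hZ, hρ.2] using congrArg Complex.re hρ.1.1.trace_eq_sum_eigenvalues.symm
  calc _ ≤ (∑ m, negMulLog (∑ z, Complex.normSq (Z z m))) / log 2 :=
        sum_probOf_mul_vnEntropy_condA_le Z hZ1.le hv1 hsum
    _ = vnEntropy (Z * Zᴴ) := by simp only [hZ, vnEntropy_eq_sum_negMulLog hρ.1.1]

end
end

section
/- For any bipartite pure state |ψ⟩^{AB} and any rank-one projective measurement {Π_k^B} on B leaving ρ^B invariant, S(|ψ⟩⟨ψ| || ρ̃^{AB}) = S(ρ^B); hence the relative entropy of nonlocality of a pure state equals the entropy of the measured subsystem. -/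
open scoped Kronecker Classical ComplexOrder
open Matrix

noncomputable section

variable {n : Type*} [Fintype n] [DecidableEq n]

variable {a b : Type*} [Fintype a] [DecidableEq a] [Fintype b] [DecidableEq b]
variable {ι : Type*} [Fintype ι]

/-!
For the pure state `ρ = |ψ⟩⟨ψ|` the matrix logarithm vanishes, so `S(ρ‖ρ̃) = -Tr(ρ log ρ̃)`.
With `Mₖ = 1 ⊗ Πₖ` the matrices `Mₖ ρ` sum to `ρ` and are eigen-matrices of `ρ̃ = ∑ₖ Mₖ ρ Mₖ`:
`ρ̃ Mₖ ρ = Mₖ (ρ Mₖ ρ) = qₖ Mₖ ρ`, because a rank-one projection `ρ` satisfies `ρ X ρ = Tr(ρ X) ρ`.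
Hence `S(ρ‖ρ̃) = -∑ₖ qₖ log qₖ` with `qₖ = Tr(Mₖ ρ) = Tr(Πₖ ρᴮ)`. On the other side, invariance
and the same identity for the rank-one `Πₖ` give `ρᴮ = ∑ₖ Πₖ ρᴮ Πₖ = ∑ₖ qₖ Πₖ`, so `S(ρᴮ)` is the
same Shannon entropy. The set defining `N_RE` is therefore the singleton `{S(ρᴮ)}`: it is nonempty
because the spectral projections of `ρᴮ` form an invariant rank-one measurement.
-/

namespace Matrix

variable {𝕜 : Type*} [RCLike 𝕜] {A B : Matrix n n 𝕜}

theorem trace_conjStarAlgAut {R : Type*} [CommRing R] [StarRing R]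
    (U : unitary (Matrix n n R)) (X : Matrix n n R) :
    (Unitary.conjStarAlgAut R _ U X).trace = X.trace := by
  rw [Unitary.conjStarAlgAut_apply, trace_mul_cycle, Unitary.coe_star_mul_self, one_mul]

namespace IsHermitian

theorem trace_cfc (hA : A.IsHermitian) (f : ℝ → ℝ) :
    (cfc f A).trace = ∑ i, (f (hA.eigenvalues i) : 𝕜) := by
  rw [hA.cfc_eq, IsHermitian.cfc, trace_conjStarAlgAut, trace_diagonal]
  rfl

theorem cfc_mul_of_mul_eq_smul (hA : A.IsHermitian) (f : ℝ → ℝ) {r : ℝ}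
    (hAB : A * B = (r : 𝕜) • B) : cfc f A * B = (f r : 𝕜) • B := by
  set U : Matrix n n 𝕜 := ↑hA.eigenvectorUnitary
  have hUU : U * star U = 1 := Unitary.coe_mul_star_self _
  set C := star U * B
  have hDC : diagonal (RCLike.ofReal ∘ hA.eigenvalues) * C = (r : 𝕜) • C := by
    rw [← hA.conjStarAlgAut_star_eigenvectorUnitary, Unitary.conjStarAlgAut_star_apply,
      Matrix.mul_assoc, Matrix.mul_assoc, ← Matrix.mul_assoc U, hUU, Matrix.one_mul, hAB,
      Matrix.mul_smul]
  -- `C` vanishes on every row `i` with `λᵢ ≠ r`.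
  have hfC : diagonal (RCLike.ofReal ∘ f ∘ hA.eigenvalues) * C = (f r : 𝕜) • C := by
    ext i j
    have hij := congrFun₂ hDC i j
    simp only [diagonal_mul, smul_apply, Function.comp_apply, smul_eq_mul] at hij ⊢
    rcases eq_or_ne (C i j) 0 with h | h
    · simp [h]
    · rw [RCLike.ofReal_injective (mul_left_injective₀ h hij)]
  calc cfc f A * B = U * (diagonal (RCLike.ofReal ∘ f ∘ hA.eigenvalues) * C) := by
        rw [hA.cfc_eq, IsHermitian.cfc, Unitary.conjStarAlgAut_apply]
        simp only [C, U, Matrix.mul_assoc]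
    _ = (f r : 𝕜) • B := by
        rw [hfC, Matrix.mul_smul, ← Matrix.mul_assoc, hUU, Matrix.one_mul]

end IsHermitian

end Matrix

section Entropy

variable {A : Matrix n n ℂ}

theorem matLog_eq_cfc (hA : A.IsHermitian) : matLog A = cfc (Real.logb 2) A := by
  rw [matLog, dif_pos hA, hA.cfc_eq, IsHermitian.cfc, Unitary.conjStarAlgAut_apply]
  rfl

theorem matLog_eq_zero_of_isIdempotentElem (hA : A.IsHermitian) (hA' : IsIdempotentElem A) :
    matLog A = 0 := by
  rw [matLog_eq_cfc hA, cfc_congr (g := 0), cfc_zero]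
  intro x hx
  rcases hA'.spectrum_subset ℝ hx with rfl | rfl <;> simp

theorem vnEntropy_eq_neg_re_trace_matLog_mul (hA : A.IsHermitian) :
    vnEntropy A = -((matLog A * A).trace).re := by
  have hfin := A.finite_real_spectrum
  have hmul : matLog A * A = cfc (fun x => Real.logb 2 x * x) A := by
    rw [cfc_mul _ _ A (hfin.continuousOn _) (hfin.continuousOn _), cfc_id' ℝ A, matLog_eq_cfc hA]
  rw [vnEntropy, dif_pos hA, hmul, hA.trace_cfc, Complex.re_sum]
  simp [mul_comm]

theorem trace_matLog_mul_sum (hA : A.IsHermitian) {X : ι → Matrix n n ℂ} {r : ι → ℝ}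
    (hX : ∀ k, A * X k = (r k : ℂ) • X k) :
    (matLog A * ∑ k, X k).trace = ∑ k, (Real.logb 2 (r k) : ℂ) * (X k).trace := by
  simp only [matLog_eq_cfc hA, Finset.mul_sum, trace_sum, hA.cfc_mul_of_mul_eq_smul _ (hX _),
    trace_smul, smul_eq_mul]
  rfl

end Entropy

theorem exists_eq_piSingle_of_sum_eq_one {f : n → ℝ} (h01 : ∀ i, f i = 0 ∨ f i = 1)
    (hsum : ∑ i, f i = 1) : ∃ i₀, f = Pi.single i₀ 1 := by
  have hcard : ((Finset.univ.filter fun i => f i = 1).card : ℝ) = ∑ i, f i := by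
    rw [Finset.natCast_card_filter]
    refine Finset.sum_congr rfl fun i _ => ?_
    rcases h01 i with h | h <;> simp [h]
  obtain ⟨i₀, hi₀⟩ := Finset.card_eq_one.mp (by exact_mod_cast hcard.trans hsum)
  refine ⟨i₀, funext fun i => ?_⟩
  have hi : f i = 1 ↔ i = i₀ := by simpa using Finset.ext_iff.mp hi₀ i
  rcases h01 i with h | h <;> simp_all

namespace Matrix

section RankOne

variable {𝕜 : Type*} [RCLike 𝕜]

theorem IsHermitian.exists_eq_vecMulVec_star_s6 {P : Matrix n n 𝕜} (hP : P.IsHermitian)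
    (hP2 : IsIdempotentElem P) (hP1 : P.trace = 1) : ∃ u : n → 𝕜, P = vecMulVec u (star u) := by
  obtain ⟨i₀, hi₀⟩ : ∃ i₀, hP.eigenvalues = Pi.single i₀ 1 := by
    refine exists_eq_piSingle_of_sum_eq_one
      (fun i => hP2.spectrum_subset ℝ (hP.eigenvalues_mem_spectrum_real i)) ?_
    exact_mod_cast hP.trace_eq_sum_eigenvalues.symm.trans hP1
  have hD : diagonal (RCLike.ofReal ∘ hP.eigenvalues) =
      vecMulVec (Pi.single i₀ (1 : 𝕜)) (Pi.single i₀ 1) := by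
    rw [← single_eq_single_vecMulVec_single, ← diagonal_single, hi₀]
    congr 1
    funext i
    by_cases h : i = i₀ <;> simp [h]
  set U : Matrix n n 𝕜 := ↑hP.eigenvectorUnitary
  refine ⟨U *ᵥ Pi.single i₀ 1, ?_⟩
  conv_lhs => rw [hP.spectral_theorem, Unitary.conjStarAlgAut_apply, hD]
  rw [mul_vecMulVec, vecMulVec_mul, star_mulVec, ← Pi.single_star, star_one,
    star_eq_conjTranspose]

variable {m R : Type*} [Fintype m] [CommSemiring R]

theorem vecMulVec_mul_mul_vecMulVec (u v : m → R) (X : Matrix m m R) :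
    vecMulVec u v * X * vecMulVec u v = (v ⬝ᵥ X *ᵥ u) • vecMulVec u v := by
  rw [vecMulVec_mul, vecMulVec_mul_vecMulVec, vecMulVec_smul, dotProduct_mulVec]

theorem trace_vecMulVec_mul (u v : m → R) (X : Matrix m m R) :
    (vecMulVec u v * X).trace = v ⬝ᵥ X *ᵥ u := by
  rw [vecMulVec_mul, trace_vecMulVec, dotProduct_comm, dotProduct_mulVec]

theorem IsHermitian.mul_mul_eq_trace_mul_smul {P : Matrix n n 𝕜} (hP : P.IsHermitian)
    (hP2 : IsIdempotentElem P) (hP1 : P.trace = 1) (X : Matrix n n 𝕜) :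
    P * X * P = (P * X).trace • P := by
  obtain ⟨u, rfl⟩ := hP.exists_eq_vecMulVec_star_s6 hP2 hP1
  rw [vecMulVec_mul_mul_vecMulVec, trace_vecMulVec_mul]

end RankOne

theorem IsHermitian.ofReal_re_trace_mul {m : Type*} [Fintype m] {A B : Matrix m m ℂ}
    (hA : A.IsHermitian) (hB : B.IsHermitian) : (((A * B).trace.re : ℝ) : ℂ) = (A * B).trace := by
  rw [← Complex.conj_eq_iff_re, ← Complex.star_def, ← trace_conjTranspose, conjTranspose_mul,
    hA.eq, hB.eq, trace_mul_comm]

end Matrix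

section Measurement

variable {m : Type*} [Fintype m] [DecidableEq m]

theorem IsProjMeas.isIdempotentElem {P : ι → Matrix m m ℂ} (hP : IsProjMeas P) (k : ι) :
    IsIdempotentElem (P k) :=
  (hP.2.1 k k).trans (if_pos rfl)

theorem IsProjMeas.sum_mul_mul_mul {P : ι → Matrix m m ℂ} (hP : IsProjMeas P)
    (X : Matrix m m ℂ) (k : ι) : (∑ j, P j * X * P j) * P k = P k * X * P k := by
  simp only [Finset.sum_mul, Matrix.mul_assoc, hP.2.1, mul_ite, mul_zero, Finset.sum_ite_eq',
    Finset.mem_univ, if_true]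

theorem relEntropy_sum_mul_mul_of_rankOne {ρ : Matrix m m ℂ} (hρ : ρ.IsHermitian)
    (hρ2 : IsIdempotentElem ρ) (hρ1 : ρ.trace = 1) {M : ι → Matrix m m ℂ} (hM : IsProjMeas M) :
    relEntropy ρ (∑ k, M k * ρ * M k) =
      -∑ k, (M k * ρ).trace.re * Real.logb 2 (M k * ρ).trace.re := by
  set q : ι → ℝ := fun k => (M k * ρ).trace.re
  have hq : ∀ k, (q k : ℂ) = (M k * ρ).trace := fun k => (hM.1 k).ofReal_re_trace_mul hρ
  have hσ : (∑ k, M k * ρ * M k).IsHermitian := isSelfAdjoint_sum _ fun k _ => by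
    have h := isHermitian_mul_mul_conjTranspose (M k) hρ
    rwa [(hM.1 k).eq] at h
  have heig : ∀ k, (∑ j, M j * ρ * M j) * (M k * ρ) = (q k : ℂ) • (M k * ρ) := fun k => by
    rw [← Matrix.mul_assoc, hM.sum_mul_mul_mul, Matrix.mul_assoc (M k), Matrix.mul_assoc (M k),
      hρ.mul_mul_eq_trace_mul_smul hρ2 hρ1, Matrix.mul_smul, trace_mul_comm, hq]
  calc relEntropy ρ (∑ k, M k * ρ * M k)
      = -(matLog (∑ k, M k * ρ * M k) * ∑ k, M k * ρ).trace.re := by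
        rw [← Finset.sum_mul, hM.2.2, Matrix.one_mul, relEntropy,
          matLog_eq_zero_of_isIdempotentElem hρ hρ2, zero_sub, Matrix.mul_neg, trace_neg,
          Complex.neg_re, trace_mul_comm]
    _ = -∑ k, q k * Real.logb 2 (q k) := by
        simp only [trace_matLog_mul_sum hσ heig, ← hq, Complex.re_sum, ← Complex.ofReal_mul,
          Complex.ofReal_re, mul_comm]

theorem vnEntropy_eq_of_invariant {ρ : Matrix m m ℂ} (hρ : ρ.IsHermitian)
    {P : ι → Matrix m m ℂ} (hP : IsRankOneMeas P) (hinv : Invariant P ρ) :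
    vnEntropy ρ = -∑ k, (P k * ρ).trace.re * Real.logb 2 (P k * ρ).trace.re := by
  obtain ⟨hPM, htr⟩ := hP
  set q : ι → ℝ := fun k => (P k * ρ).trace.re
  have hq : ∀ k, (q k : ℂ) = (P k * ρ).trace := fun k => (hPM.1 k).ofReal_re_trace_mul hρ
  have hPk : ∀ k, P k * ρ * P k = (q k : ℂ) • P k := fun k => by
    rw [(hPM.1 k).mul_mul_eq_trace_mul_smul (hPM.isIdempotentElem k) (htr k), hq]
  have hdec : ρ = ∑ k, (q k : ℂ) • P k := hinv.symm.trans (Finset.sum_congr rfl fun k _ => hPk k)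
  have heig : ∀ k, ρ * ((q k : ℂ) • P k) = (q k : ℂ) • ((q k : ℂ) • P k) := fun k => by
    rw [Matrix.mul_smul, ← hPk, ← hPM.sum_mul_mul_mul, show ∑ j, P j * ρ * P j = ρ from hinv]
  calc vnEntropy ρ = -(matLog ρ * ∑ k, (q k : ℂ) • P k).trace.re := by
        rw [vnEntropy_eq_neg_re_trace_matLog_mul hρ, ← hdec]
    _ = -∑ k, q k * Real.logb 2 (q k) := by
        simp only [trace_matLog_mul_sum hρ heig, trace_smul, htr, smul_eq_mul, mul_one,
          Complex.re_sum, ← Complex.ofReal_mul, Complex.ofReal_re, mul_comm]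

end Measurement

section Bipartite

theorem IsProjMeas.one_kronecker {P : ι → Matrix b b ℂ} (hP : IsProjMeas P) :
    IsProjMeas fun k => (1 : Matrix a a ℂ) ⊗ₖ P k := by
  obtain ⟨hherm, horth, hsum⟩ := hP
  refine ⟨fun k => ?_, fun j k => ?_, ?_⟩
  · rw [IsHermitian, conjTranspose_kronecker, conjTranspose_one, (hherm k).eq]
  · rw [← mul_kronecker_mul, Matrix.one_mul, horth]
    split_ifs
    · rfl
    · exact kronecker_zero _
  · calc ∑ k, (1 : Matrix a a ℂ) ⊗ₖ P k = (1 : Matrix a a ℂ) ⊗ₖ ∑ k, P k :=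
          (map_sum (kroneckerBilinear (R := ℂ) (1 : Matrix a a ℂ)) P _).symm
      _ = 1 := by rw [hsum, one_kronecker_one]

theorem trace_one_kronecker_mul {l m : Type*} [Fintype l] [DecidableEq l] [Fintype m]
    (Q : Matrix m m ℂ) (ρ : Matrix (l × m) (l × m) ℂ) :
    ((1 : Matrix l l ℂ) ⊗ₖ Q * ρ).trace = (Q * ptraceA ρ).trace := by
  have hdiag : ∀ x i, ((1 : Matrix l l ℂ) ⊗ₖ Q * ρ) (x, i) (x, i) =
      ∑ j, Q i j * ρ (x, j) (x, i) := fun x i => by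
    simp [mul_apply, Fintype.sum_prod_type, one_apply]
  simp only [trace, diag, Fintype.sum_prod_type, hdiag, mul_apply, ptraceA, Finset.mul_sum]
  rw [Finset.sum_comm]
  exact Finset.sum_congr rfl fun i _ => Finset.sum_comm

theorem Matrix.IsHermitian.ptraceA {l m : Type*} [Fintype l] {ρ : Matrix (l × m) (l × m) ℂ}
    (hρ : ρ.IsHermitian) : (ptraceA ρ).IsHermitian := by
  ext i j
  rw [conjTranspose_apply]
  simp only [_root_.ptraceA, star_sum, ← conjTranspose_apply, hρ.eq]

end Bipartite

section PureState

variable {m : Type*} [Fintype m] {ψ : m → ℂ}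

theorem isIdempotentElem_vecMulVec_star (hψ : star ψ ⬝ᵥ ψ = 1) :
    IsIdempotentElem (vecMulVec ψ (star ψ)) := by
  rw [IsIdempotentElem, vecMulVec_mul_vecMulVec, hψ, one_smul]

theorem trace_vecMulVec_star (hψ : star ψ ⬝ᵥ ψ = 1) : (vecMulVec ψ (star ψ)).trace = 1 := by
  rw [trace_vecMulVec, dotProduct_comm, hψ]

end PureState

theorem relEntropy_postMeas_eq_vnEntropy_ptraceA {ψ : a × b → ℂ} (hψ : star ψ ⬝ᵥ ψ = 1)
    {P : ι → Matrix b b ℂ} (hP : IsRankOneMeas P)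
    (hinv : Invariant P (ptraceA (vecMulVec ψ (star ψ)))) :
    relEntropy (vecMulVec ψ (star ψ)) (postMeas P (vecMulVec ψ (star ψ))) =
      vnEntropy (ptraceA (vecMulVec ψ (star ψ))) := by
  have hρ : (vecMulVec ψ (star ψ)).IsHermitian := (posSemidef_vecMulVec_self_star ψ).isHermitian
  rw [postMeas, relEntropy_sum_mul_mul_of_rankOne hρ (isIdempotentElem_vecMulVec_star hψ)
      (trace_vecMulVec_star hψ) hP.1.one_kronecker, vnEntropy_eq_of_invariant hρ.ptraceA hP hinv]
  simp only [trace_one_kronecker_mul]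

section Existence

variable {m : Type*} [Fintype m] [DecidableEq m]

theorem isRankOneMeas_single : IsRankOneMeas fun k : m => (single k k 1 : Matrix m m ℂ) := by
  refine ⟨⟨fun k => ?_, fun j k => ?_, sum_single_one⟩, fun k => trace_single_eq_same k 1⟩
  · rw [IsHermitian, conjTranspose_single, star_one]
  · by_cases h : j = k
    · subst h
      simp [single_mul_single_same]
    · simp [h, single_mul_single_of_ne]

theorem invariant_single_diagonal (d : m → ℂ) : Invariant (fun k => single k k 1) (diagonal d) := by
  simp only [Invariant, single_mul_mul_single, one_mul, mul_one, diagonal_apply_eq,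
    sum_single_eq_diagonal]

variable (U : unitary (Matrix m m ℂ))

theorem IsRankOneMeas.conjStarAlgAut {P : ι → Matrix m m ℂ} (hP : IsRankOneMeas P) :
    IsRankOneMeas fun k => Unitary.conjStarAlgAut ℂ _ U (P k) := by
  obtain ⟨⟨hherm, horth, hsum⟩, htr⟩ := hP
  refine ⟨⟨fun k => IsSelfAdjoint.map (hherm k) _, fun j k => ?_, ?_⟩, fun k => ?_⟩
  · rw [← map_mul, horth]
    split_ifs
    · rfl
    · exact map_zero _
  · rw [← map_sum, hsum, map_one]
  · rw [trace_conjStarAlgAut, htr]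

theorem Invariant.conjStarAlgAut {P : ι → Matrix m m ℂ} {ρ : Matrix m m ℂ}
    (h : Invariant P ρ) :
    Invariant (fun k => Unitary.conjStarAlgAut ℂ _ U (P k)) (Unitary.conjStarAlgAut ℂ _ U ρ) := by
  unfold Invariant at h ⊢
  simp only [← map_mul, ← map_sum, h]

theorem exists_isRankOneMeas_invariant {ρ : Matrix m m ℂ} (hρ : ρ.IsHermitian) :
    ∃ P : m → Matrix m m ℂ, IsRankOneMeas P ∧ Invariant P ρ := by
  rw [hρ.spectral_theorem]
  exact ⟨_, isRankOneMeas_single.conjStarAlgAut _, (invariant_single_diagonal _).conjStarAlgAut _⟩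

end Existence

/-- For a bipartite pure state, S(ρ‖ρ̃) = S(ρ^B) for every locally invariant
rank-one measurement; hence N_RE equals the entropy of the measured subsystem. -/
theorem stmt6 (ψ : a × b → ℂ) (hψ : star ψ ⬝ᵥ ψ = 1) :
    (∀ P : b → Matrix b b ℂ, IsRankOneMeas P →
      Invariant P (ptraceA (Matrix.vecMulVec ψ (star ψ))) →
      relEntropy (Matrix.vecMulVec ψ (star ψ))
          (postMeas P (Matrix.vecMulVec ψ (star ψ))) =
        vnEntropy (ptraceA (Matrix.vecMulVec ψ (star ψ)))) ∧
    NRE (Matrix.vecMulVec ψ (star ψ)) =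
      vnEntropy (ptraceA (Matrix.vecMulVec ψ (star ψ))) := by
  have hvalue := fun (P : b → Matrix b b ℂ) (hP : IsRankOneMeas P) hinv =>
    relEntropy_postMeas_eq_vnEntropy_ptraceA hψ hP hinv
  refine ⟨hvalue, ?_⟩
  obtain ⟨P₀, hP₀, hinv₀⟩ :=
    exists_isRankOneMeas_invariant (posSemidef_vecMulVec_self_star ψ).isHermitian.ptraceA
  unfold NRE
  refine (congrArg sSup (Set.eq_singleton_iff_unique_mem.mpr ⟨?_, ?_⟩)).trans (csSup_singleton _)
  · exact ⟨P₀, hP₀, hinv₀, (hvalue P₀ hP₀ hinv₀).symm⟩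
  · rintro x ⟨P, hP, hinv, rfl⟩
    exact hvalue P hP hinv

end
end

section
/- For the two-qubit Bell-diagonal state ρ = (1/4)(I⊗I + Σ_{i=1}^3 c_i σ_i⊗σ_i), the maximum over all rank-one projective measurements on qubit B of the average conditional entropy Σ_k p_k S(ρ_k^A) equals f(c_min), where f(x) = −((1+x)/2)log₂((1+x)/2) − ((1−x)/2)log₂((1−x)/2) and c_min = min{|c₁|,|c₂|,|c₃|}. -/
open scoped Kronecker Classical ComplexOrder
open Matrix

noncomputable section

variable {n : Type*} [Fintype n] [DecidableEq n]

variable {a b : Type*} [Fintype a] [DecidableEq a] [Fintype b] [DecidableEq b]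
variable {ι : Type*} [Fintype ι]

def pauli1 : Matrix (Fin 2) (Fin 2) ℂ := !![0, 1; 1, 0]
def pauli2 : Matrix (Fin 2) (Fin 2) ℂ := !![0, -Complex.I; Complex.I, 0]
def pauli3 : Matrix (Fin 2) (Fin 2) ℂ := !![1, 0; 0, -1]

/-- The Bell-diagonal two-qubit state (1/4)(I⊗I + Σᵢ cᵢ σᵢ⊗σᵢ). -/
def bellDiag (c₁ c₂ c₃ : ℝ) : Matrix (Fin 2 × Fin 2) (Fin 2 × Fin 2) ℂ :=
  (1/4 : ℂ) • ((1 : Matrix (Fin 2 × Fin 2) (Fin 2 × Fin 2) ℂ)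
    + (c₁ : ℂ) • (pauli1 ⊗ₖ pauli1) + (c₂ : ℂ) • (pauli2 ⊗ₖ pauli2)
    + (c₃ : ℂ) • (pauli3 ⊗ₖ pauli3))

/-- f(x) = binary entropy of (1+x)/2, base 2. -/
def binEnt (x : ℝ) : ℝ :=
  -((1 + x) / 2 * Real.logb 2 ((1 + x) / 2)) - (1 - x) / 2 * Real.logb 2 ((1 - x) / 2)

/-!
Write a rank-one projector on B as `(I + n·σ)/2` with `n` a unit vector; the two outcomes are `±n`.
For the Bell-diagonal state each outcome has probability `1/2` and leaves A in the qubit state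
`(I + (c₁n₁, c₂n₂, c₃n₃)·σ)/2`, whose entropy is `f(‖(c₁n₁, c₂n₂, c₃n₃)‖)`. Positivity of the state
forces `|cᵢ| ≤ 1`, so this norm lies in `[c_min, 1]`, where `f` is decreasing, and it equals `c_min`
when `n` is the coordinate axis of the smallest `|cᵢ|`.
-/

/-- `(I + r₁σ₁ + r₂σ₂ + r₃σ₃)/2`, written out entrywise. -/
def blochMatrix (r₁ r₂ r₃ : ℝ) : Matrix (Fin 2) (Fin 2) ℂ :=
  !![((1 + r₃) / 2 : ℝ), ((r₁ : ℂ) - r₂ * Complex.I) / 2;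
     ((r₁ : ℂ) + r₂ * Complex.I) / 2, ((1 - r₃) / 2 : ℝ)]

lemma blochMatrix_isHermitian (r₁ r₂ r₃ : ℝ) : (blochMatrix r₁ r₂ r₃).IsHermitian := by
  ext i j
  fin_cases i <;> fin_cases j <;> simp [blochMatrix, Complex.ext_iff]

lemma trace_blochMatrix (r₁ r₂ r₃ : ℝ) : (blochMatrix r₁ r₂ r₃).trace = 1 := by
  rw [blochMatrix, Matrix.trace_fin_two_of]
  push_cast
  ring

lemma det_blochMatrix (r₁ r₂ r₃ : ℝ) :
    (blochMatrix r₁ r₂ r₃).det = (((1 - (r₁ ^ 2 + r₂ ^ 2 + r₃ ^ 2)) / 4 : ℝ) : ℂ) := by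
  rw [blochMatrix, Matrix.det_fin_two_of]
  push_cast
  linear_combination (r₂ : ℂ) ^ 2 / 4 * Complex.I_sq

lemma blochMatrix_mul_self_eq_iff (r₁ r₂ r₃ : ℝ) :
    blochMatrix r₁ r₂ r₃ * blochMatrix r₁ r₂ r₃ = blochMatrix r₁ r₂ r₃ ↔
      r₁ ^ 2 + r₂ ^ 2 + r₃ ^ 2 = 1 := by
  constructor
  · intro h
    have h00 := congrFun (congrFun h 0) 0
    simp only [blochMatrix, Matrix.mul_apply, Fin.sum_univ_two, Matrix.of_apply,
      Matrix.cons_val', Matrix.cons_val_zero, Matrix.cons_val_one, Matrix.cons_val_fin_one] at h00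
    push_cast at h00
    exact_mod_cast (by linear_combination 4 * h00 + (r₂ : ℂ) ^ 2 * Complex.I_sq :
      (r₁ : ℂ) ^ 2 + r₂ ^ 2 + r₃ ^ 2 = 1)
  · intro hr
    have hrC : (r₁ : ℂ) ^ 2 + r₂ ^ 2 + r₃ ^ 2 = 1 := by exact_mod_cast hr
    ext i j
    fin_cases i <;> fin_cases j <;> simp [blochMatrix, Matrix.mul_apply] <;>
      first | ring1 | linear_combination hrC / 4 - (r₂ : ℂ) ^ 2 / 4 * Complex.I_sq

lemma blochMatrix_add_blochMatrix_neg (r₁ r₂ r₃ : ℝ) :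
    blochMatrix r₁ r₂ r₃ + blochMatrix (-r₁) (-r₂) (-r₃) = 1 := by
  ext i j
  fin_cases i <;> fin_cases j <;> simp [blochMatrix] <;> ring

lemma blochMatrix_mul_blochMatrix_neg {r₁ r₂ r₃ : ℝ} (hr : r₁ ^ 2 + r₂ ^ 2 + r₃ ^ 2 = 1) :
    blochMatrix r₁ r₂ r₃ * blochMatrix (-r₁) (-r₂) (-r₃) = 0 := by
  rw [← sub_eq_of_eq_add' (blochMatrix_add_blochMatrix_neg r₁ r₂ r₃).symm, mul_sub, mul_one,
    (blochMatrix_mul_self_eq_iff r₁ r₂ r₃).mpr hr, sub_self]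

lemma vnEntropy_eq_binEnt {A : Matrix (Fin 2) (Fin 2) ℂ} (hA : A.IsHermitian)
    (htr : A.trace = 1) {t : ℝ} (hdet : A.det = (((1 - t ^ 2) / 4 : ℝ) : ℂ)) :
    vnEntropy A = binEnt t := by
  have hsum : hA.eigenvalues 0 + hA.eigenvalues 1 = 1 := by
    have := hA.trace_eq_sum_eigenvalues
    rw [htr, Fin.sum_univ_two] at this
    simpa using (congrArg Complex.re this).symm
  have hprod : hA.eigenvalues 0 * hA.eigenvalues 1 = (1 - t ^ 2) / 4 := by
    have := hA.det_eq_prod_eigenvalues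
    rw [hdet, Fin.prod_univ_two] at this
    simpa [← Complex.ofReal_pow] using (congrArg Complex.re this).symm
  have hdiff : (hA.eigenvalues 0 - hA.eigenvalues 1) ^ 2 = t ^ 2 := by nlinarith
  rw [vnEntropy, dif_pos hA, Fin.sum_univ_two, binEnt]
  rcases sq_eq_sq_iff_eq_or_eq_neg.mp hdiff with h | h
  · rw [show hA.eigenvalues 0 = (1 + t) / 2 by linarith,
      show hA.eigenvalues 1 = (1 - t) / 2 by linarith]
    ring
  · rw [show hA.eigenvalues 0 = (1 - t) / 2 by linarith,
      show hA.eigenvalues 1 = (1 + t) / 2 by linarith]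
    ring

lemma vnEntropy_blochMatrix (r₁ r₂ r₃ : ℝ) :
    vnEntropy (blochMatrix r₁ r₂ r₃) = binEnt √(r₁ ^ 2 + r₂ ^ 2 + r₃ ^ 2) :=
  vnEntropy_eq_binEnt (blochMatrix_isHermitian _ _ _) (trace_blochMatrix _ _ _) <| by
    rw [det_blochMatrix, Real.sq_sqrt (by positivity)]

lemma binEnt_eq_binEntropy (x : ℝ) : binEnt x = Real.binEntropy ((1 + x) / 2) / Real.log 2 := by
  rw [binEnt, Real.binEntropy, Real.logb, Real.logb, Real.log_inv, Real.log_inv,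
    show 1 - (1 + x) / 2 = (1 - x) / 2 by ring]
  ring

lemma binEnt_antitoneOn : AntitoneOn binEnt (Set.Icc 0 1) := by
  intro s ⟨hs0, hs1⟩ t ⟨ht0, ht1⟩ hst
  rw [binEnt_eq_binEntropy, binEnt_eq_binEntropy]
  gcongr
  exact Real.binEntropy_strictAntiOn.antitoneOn ⟨by linarith, by linarith⟩
    ⟨by linarith, by linarith⟩ (by linarith)

lemma exists_blochMatrix_eq {A : Matrix (Fin 2) (Fin 2) ℂ} (hA : A.IsHermitian)
    (htr : A.trace = 1) : ∃ r₁ r₂ r₃ : ℝ, A = blochMatrix r₁ r₂ r₃ := by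
  refine ⟨2 * (A 0 1).re, -(2 * (A 0 1).im), 2 * (A 0 0).re - 1, ?_⟩
  have h00 : (A 0 0).im = 0 := Complex.conj_eq_iff_im.mp (hA.apply 0 0)
  have h10 : A 1 0 = star (A 0 1) := (hA.apply 1 0).symm
  have h11 : A 1 1 = 1 - A 0 0 := by
    rw [Matrix.trace_fin_two] at htr
    linear_combination htr
  rw [Matrix.eta_fin_two A, h10, h11]
  ext i j
  fin_cases i <;> fin_cases j <;> simp [blochMatrix, Complex.ext_iff, h00] <;> ring

def blochMeas (n₁ n₂ n₃ : ℝ) : Fin 2 → Matrix (Fin 2) (Fin 2) ℂ :=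
  ![blochMatrix n₁ n₂ n₃, blochMatrix (-n₁) (-n₂) (-n₃)]

lemma isRankOneMeas_blochMeas {n₁ n₂ n₃ : ℝ} (hn : n₁ ^ 2 + n₂ ^ 2 + n₃ ^ 2 = 1) :
    IsRankOneMeas (blochMeas n₁ n₂ n₃) := by
  have hn' : (-n₁) ^ 2 + (-n₂) ^ 2 + (-n₃) ^ 2 = 1 := by simpa only [neg_sq] using hn
  have horth' := blochMatrix_mul_blochMatrix_neg hn'
  simp only [neg_neg] at horth'
  refine ⟨⟨fun k => ?_, fun j k => ?_, ?_⟩, fun k => ?_⟩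
  · fin_cases k <;> exact blochMatrix_isHermitian _ _ _
  · fin_cases j <;> fin_cases k <;>
      simp [blochMeas, (blochMatrix_mul_self_eq_iff _ _ _).mpr hn,
        (blochMatrix_mul_self_eq_iff _ _ _).mpr hn', blochMatrix_mul_blochMatrix_neg hn, horth']
  · simp [blochMeas, blochMatrix_add_blochMatrix_neg]
  · fin_cases k <;> exact trace_blochMatrix _ _ _

lemma IsRankOneMeas.exists_eq_blochMeas {P : Fin 2 → Matrix (Fin 2) (Fin 2) ℂ}
    (hP : IsRankOneMeas P) :
    ∃ n₁ n₂ n₃ : ℝ, n₁ ^ 2 + n₂ ^ 2 + n₃ ^ 2 = 1 ∧ P = blochMeas n₁ n₂ n₃ := by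
  obtain ⟨⟨hherm, horth, hsum⟩, htr⟩ := hP
  obtain ⟨n₁, n₂, n₃, hP0⟩ := exists_blochMatrix_eq (hherm 0) (htr 0)
  have hn : n₁ ^ 2 + n₂ ^ 2 + n₃ ^ 2 = 1 := by
    rw [← blochMatrix_mul_self_eq_iff, ← hP0]
    simpa using horth 0 0
  have hP1 : P 1 = blochMatrix (-n₁) (-n₂) (-n₃) := by
    rw [Fin.sum_univ_two, hP0, ← blochMatrix_add_blochMatrix_neg n₁ n₂ n₃] at hsum
    exact add_left_cancel hsum
  refine ⟨n₁, n₂, n₃, hn, funext fun k => ?_⟩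
  fin_cases k
  exacts [hP0, hP1]

lemma trace_one_kronecker_blochMatrix_mul_bellDiag (c₁ c₂ c₃ n₁ n₂ n₃ : ℝ) :
    ((1 ⊗ₖ blochMatrix n₁ n₂ n₃) * bellDiag c₁ c₂ c₃).trace = 1 / 2 := by
  simp only [trace, blochMatrix, Complex.ofReal_div, Complex.ofReal_add, Complex.ofReal_one,
    Complex.ofReal_ofNat, Complex.ofReal_sub, bellDiag, one_div, pauli1, Complex.coe_smul, pauli2,
    pauli3, smul_add, diag_apply, Matrix.mul_apply, kroneckerMap_apply, Matrix.one_apply, of_apply,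
    cons_val', cons_val_fin_one, ite_mul, one_mul, zero_mul, Matrix.add_apply, Matrix.smul_apply,
    smul_eq_mul, mul_ite, mul_one, mul_zero, Complex.real_smul, Fintype.sum_prod_type,
    Finset.sum_ite_irrel, Fin.sum_univ_two, Fin.isValue, cons_val_zero, cons_val_one,
    Finset.sum_const_zero, Finset.sum_ite_eq, Finset.mem_univ, ↓reduceIte, Prod.mk.injEq, true_and,
    add_zero, one_ne_zero, zero_add, zero_ne_one, mul_neg, neg_zero, neg_neg]
  ring

lemma ptraceB_one_kronecker_blochMatrix_bellDiag (c₁ c₂ c₃ : ℝ) {n₁ n₂ n₃ : ℝ}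
    (hn : n₁ ^ 2 + n₂ ^ 2 + n₃ ^ 2 = 1) :
    ptraceB ((1 ⊗ₖ blochMatrix n₁ n₂ n₃) * bellDiag c₁ c₂ c₃ * (1 ⊗ₖ blochMatrix n₁ n₂ n₃)) =
      (1 / 2 : ℂ) • blochMatrix (c₁ * n₁) (c₂ * n₂) (c₃ * n₃) := by
  have hnC : (n₁ : ℂ) ^ 2 + (n₂ : ℂ) ^ 2 + (n₃ : ℂ) ^ 2 = 1 := by exact_mod_cast hn
  ext i j
  fin_cases i <;> fin_cases j <;>
    simp [ptraceB, Matrix.mul_apply, Fintype.sum_prod_type, bellDiag, blochMatrix, pauli1,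
      pauli2, pauli3, Matrix.one_apply] <;>
    first | ring1 | linear_combination hnC / 8 - (n₂ : ℂ) ^ 2 / 8 * Complex.I_sq

def avgCondEntropy (P : ι → Matrix b b ℂ) (ρ : Matrix (a × b) (a × b) ℂ) : ℝ :=
  ∑ k, probOf P ρ k * vnEntropy (condA P ρ k)

lemma avgCondEntropy_blochMeas_bellDiag (c₁ c₂ c₃ : ℝ) {n₁ n₂ n₃ : ℝ}
    (hn : n₁ ^ 2 + n₂ ^ 2 + n₃ ^ 2 = 1) :
    avgCondEntropy (blochMeas n₁ n₂ n₃) (bellDiag c₁ c₂ c₃) =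
      binEnt √((c₁ * n₁) ^ 2 + (c₂ * n₂) ^ 2 + (c₃ * n₃) ^ 2) := by
  have hn' : (-n₁) ^ 2 + (-n₂) ^ 2 + (-n₃) ^ 2 = 1 := by simpa only [neg_sq] using hn
  simp only [avgCondEntropy, Fin.sum_univ_two, probOf, condA, blochMeas, Matrix.cons_val_zero,
    Matrix.cons_val_one, trace_one_kronecker_blochMatrix_mul_bellDiag,
    ptraceB_one_kronecker_blochMatrix_bellDiag _ _ _ hn,
    ptraceB_one_kronecker_blochMatrix_bellDiag _ _ _ hn', smul_smul]
  norm_num [vnEntropy_blochMatrix]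
  ring

lemma dotProduct_mulVec_bellDiag_even (c₁ c₂ c₃ s : ℝ) :
    let v : Fin 2 × Fin 2 → ℂ := fun p => if p = (0, 0) then 1 else if p = (1, 1) then s else 0
    star v ⬝ᵥ (bellDiag c₁ c₂ c₃ *ᵥ v) =
      (((1 + c₃) * (1 + s ^ 2) + 2 * s * (c₁ - c₂)) / 4 : ℝ) := by
  simp only [dotProduct, Fin.isValue, Pi.star_apply, RCLike.star_def, mulVec, bellDiag, one_div,
    pauli1, Complex.coe_smul, pauli2, pauli3, Matrix.smul_apply, Matrix.add_apply, Matrix.one_apply,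
    kroneckerMap_apply, of_apply, cons_val', cons_val_fin_one, Complex.real_smul, smul_eq_mul,
    mul_ite, mul_one, mul_zero, Fintype.sum_prod_type, Prod.mk.injEq, Fin.sum_univ_two, and_true,
    and_false, cons_val_zero, cons_val_one, zero_ne_one, one_ne_zero, ↓reduceIte, zero_add, add_zero,
    MonoidWithZeroHom.map_ite_one_zero, mul_neg, ite_mul, one_mul, zero_mul, neg_mul,
    Complex.I_mul_I, neg_neg, map_zero, neg_zero, Complex.conj_ofReal, Complex.ofReal_div,
    Complex.ofReal_add, Complex.ofReal_mul, Complex.ofReal_one, Complex.ofReal_pow,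
    Complex.ofReal_ofNat, Complex.ofReal_sub]
  ring

lemma dotProduct_mulVec_bellDiag_odd (c₁ c₂ c₃ s : ℝ) :
    let v : Fin 2 × Fin 2 → ℂ := fun p => if p = (0, 1) then 1 else if p = (1, 0) then s else 0
    star v ⬝ᵥ (bellDiag c₁ c₂ c₃ *ᵥ v) =
      (((1 - c₃) * (1 + s ^ 2) + 2 * s * (c₁ + c₂)) / 4 : ℝ) := by
  simp only [dotProduct, Fin.isValue, Pi.star_apply, RCLike.star_def, mulVec, bellDiag, one_div,
    pauli1, Complex.coe_smul, pauli2, pauli3, Matrix.smul_apply, Matrix.add_apply, Matrix.one_apply,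
    kroneckerMap_apply, of_apply, cons_val', cons_val_fin_one, Complex.real_smul, smul_eq_mul,
    mul_ite, mul_one, mul_zero, Fintype.sum_prod_type, Prod.mk.injEq, Fin.sum_univ_two, and_true,
    and_false, cons_val_zero, cons_val_one, zero_ne_one, one_ne_zero, ↓reduceIte, zero_add, add_zero,
    MonoidWithZeroHom.map_ite_one_zero, mul_neg, ite_mul, one_mul, zero_mul, neg_mul,
    Complex.I_mul_I, neg_neg, map_zero, neg_zero, Complex.conj_ofReal, Complex.ofReal_div,
    Complex.ofReal_add, Complex.ofReal_mul, Complex.ofReal_one, Complex.ofReal_pow,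
    Complex.ofReal_ofNat, Complex.ofReal_sub]
  ring

-- With `s = ±1` the vectors above are the Bell states, the eigenvectors of `bellDiag`.
lemma abs_le_one_of_posSemidef_bellDiag {c₁ c₂ c₃ : ℝ} (hpsd : (bellDiag c₁ c₂ c₃).PosSemidef) :
    |c₁| ≤ 1 ∧ |c₂| ≤ 1 ∧ |c₃| ≤ 1 := by
  have nonneg_of_eq {r : ℝ} (v : Fin 2 × Fin 2 → ℂ)
      (hv : star v ⬝ᵥ (bellDiag c₁ c₂ c₃ *ᵥ v) = r) : 0 ≤ r := by
    exact_mod_cast hv ▸ hpsd.dotProduct_mulVec_nonneg v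
  have h₁ := nonneg_of_eq _ (dotProduct_mulVec_bellDiag_even c₁ c₂ c₃ 1)
  have h₂ := nonneg_of_eq _ (dotProduct_mulVec_bellDiag_even c₁ c₂ c₃ (-1))
  have h₃ := nonneg_of_eq _ (dotProduct_mulVec_bellDiag_odd c₁ c₂ c₃ 1)
  have h₄ := nonneg_of_eq _ (dotProduct_mulVec_bellDiag_odd c₁ c₂ c₃ (-1))
  norm_num at h₁ h₂ h₃ h₄
  refine ⟨abs_le.mpr ⟨?_, ?_⟩, abs_le.mpr ⟨?_, ?_⟩, abs_le.mpr ⟨?_, ?_⟩⟩ <;> linarith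

lemma min_abs_le_sqrt_sum_sq_mul (c₁ c₂ c₃ : ℝ) {n₁ n₂ n₃ : ℝ}
    (hn : n₁ ^ 2 + n₂ ^ 2 + n₃ ^ 2 = 1) :
    min (min |c₁| |c₂|) |c₃| ≤ √((c₁ * n₁) ^ 2 + (c₂ * n₂) ^ 2 + (c₃ * n₃) ^ 2) := by
  set m := min (min |c₁| |c₂|) |c₃|
  have hm : 0 ≤ m := by positivity
  have hm₁ : m ^ 2 ≤ c₁ ^ 2 := by
    rw [← sq_abs c₁]; gcongr; exact (min_le_left _ _).trans (min_le_left _ _)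
  have hm₂ : m ^ 2 ≤ c₂ ^ 2 := by
    rw [← sq_abs c₂]; gcongr; exact (min_le_left _ _).trans (min_le_right _ _)
  have hm₃ : m ^ 2 ≤ c₃ ^ 2 := by
    rw [← sq_abs c₃]; gcongr; exact min_le_right _ _
  rw [Real.le_sqrt hm (by positivity)]
  calc m ^ 2 = m ^ 2 * n₁ ^ 2 + m ^ 2 * n₂ ^ 2 + m ^ 2 * n₃ ^ 2 := by
        linear_combination -m ^ 2 * hn
    _ ≤ c₁ ^ 2 * n₁ ^ 2 + c₂ ^ 2 * n₂ ^ 2 + c₃ ^ 2 * n₃ ^ 2 := by gcongr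
    _ = (c₁ * n₁) ^ 2 + (c₂ * n₂) ^ 2 + (c₃ * n₃) ^ 2 := by ring

lemma sqrt_sum_sq_mul_le_one {c₁ c₂ c₃ : ℝ} (hc : |c₁| ≤ 1 ∧ |c₂| ≤ 1 ∧ |c₃| ≤ 1)
    {n₁ n₂ n₃ : ℝ} (hn : n₁ ^ 2 + n₂ ^ 2 + n₃ ^ 2 = 1) :
    √((c₁ * n₁) ^ 2 + (c₂ * n₂) ^ 2 + (c₃ * n₃) ^ 2) ≤ 1 := by
  obtain ⟨hc₁, hc₂, hc₃⟩ := hc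
  rw [Real.sqrt_le_one]
  calc (c₁ * n₁) ^ 2 + (c₂ * n₂) ^ 2 + (c₃ * n₃) ^ 2
      = |c₁| ^ 2 * n₁ ^ 2 + |c₂| ^ 2 * n₂ ^ 2 + |c₃| ^ 2 * n₃ ^ 2 := by simp only [sq_abs]; ring
    _ ≤ 1 ^ 2 * n₁ ^ 2 + 1 ^ 2 * n₂ ^ 2 + 1 ^ 2 * n₃ ^ 2 := by gcongr
    _ = 1 := by linear_combination hn

lemma exists_sqrt_sum_sq_mul_eq_min_abs (c₁ c₂ c₃ : ℝ) :
    ∃ n₁ n₂ n₃ : ℝ, n₁ ^ 2 + n₂ ^ 2 + n₃ ^ 2 = 1 ∧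
      √((c₁ * n₁) ^ 2 + (c₂ * n₂) ^ 2 + (c₃ * n₃) ^ 2) = min (min |c₁| |c₂|) |c₃| := by
  rcases min_choice (min |c₁| |c₂|) |c₃| with h | h <;> rw [h]
  · rcases min_choice |c₁| |c₂| with h' | h' <;> rw [h']
    · exact ⟨1, 0, 0, by norm_num, by simp [Real.sqrt_sq_eq_abs]⟩
    · exact ⟨0, 1, 0, by norm_num, by simp [Real.sqrt_sq_eq_abs]⟩
  · exact ⟨0, 0, 1, by norm_num, by simp [Real.sqrt_sq_eq_abs]⟩

lemma isGreatest_avgCondEntropy_bellDiag {c₁ c₂ c₃ : ℝ}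
    (hc : |c₁| ≤ 1 ∧ |c₂| ≤ 1 ∧ |c₃| ≤ 1) :
    IsGreatest {x | ∃ P : Fin 2 → Matrix (Fin 2) (Fin 2) ℂ, IsRankOneMeas P ∧
        x = avgCondEntropy P (bellDiag c₁ c₂ c₃)}
      (binEnt (min (min |c₁| |c₂|) |c₃|)) := by
  constructor
  · obtain ⟨n₁, n₂, n₃, hn, hmin⟩ := exists_sqrt_sum_sq_mul_eq_min_abs c₁ c₂ c₃
    exact ⟨_, isRankOneMeas_blochMeas hn, by rw [avgCondEntropy_blochMeas_bellDiag _ _ _ hn, hmin]⟩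
  · rintro _ ⟨P, hP, rfl⟩
    obtain ⟨n₁, n₂, n₃, hn, rfl⟩ := hP.exists_eq_blochMeas
    rw [avgCondEntropy_blochMeas_bellDiag _ _ _ hn]
    have hmin := min_abs_le_sqrt_sum_sq_mul c₁ c₂ c₃ hn
    exact binEnt_antitoneOn ⟨by positivity, hmin.trans (sqrt_sum_sq_mul_le_one hc hn)⟩
      ⟨Real.sqrt_nonneg _, sqrt_sum_sq_mul_le_one hc hn⟩ hmin

/-- For the Bell-diagonal state, the maximal average conditional entropy over
rank-one projective measurements on B equals f(c_min). -/
theorem stmt16 (c₁ c₂ c₃ : ℝ) (hpsd : (bellDiag c₁ c₂ c₃).PosSemidef) :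
    sSup {x | ∃ P : Fin 2 → Matrix (Fin 2) (Fin 2) ℂ, IsRankOneMeas P ∧
        x = ∑ k, probOf P (bellDiag c₁ c₂ c₃) k *
          vnEntropy (condA P (bellDiag c₁ c₂ c₃) k)} =
      binEnt (min (min |c₁| |c₂|) |c₃|) :=
  (isGreatest_avgCondEntropy_bellDiag (abs_le_one_of_posSemidef_bellDiag hpsd)).csSup_eq

end
end
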